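/- arXiv:1905.05451 — 6 statements merged into one kernel-verified Lean document; each statement's English description precedes it below -/
import Mathlib

section
/- Let S be a finite set, let Q : S × S → ℝ satisfy Q(x,y) ≥ 0 for all x ≠ y, and let T > 0. Suppose σ : S → ℝ → ℝ satisfies σ(x,t) > 0 for all x ∈ S, t ∈ [0,T] and satisfies the backward equation with rates Q, i.e. for every x and every t ∈ [0,T], d/dt σ(x,t) = − ∑_{y ≠ x} Q(x,y) (σ(y,t) − σ(x,t)). Suppose p : S → ℝ → ℝ satisfies the master equation with rates Q, i.e. for every x and t ∈ [0,T], d/dt p(x,t) = ∑_{y ≠ x} Q(y,x) p(y,t) − ∑_{y ≠ x} Q(x,y) p(x,t). Define the posterior rates Q̃(x,y,t) = (σ(y,t)/σ(x,t)) Q(x,y). Then the unnormalized smoothed weights ρ(x,t) := p(x,t) σ(x,t) satisfy the master equation with rates Q̃: for every x and t ∈ [0,T], d/dt ρ(x,t) = ∑_{y ≠ x} Q̃(y,x,t) ρ(y,t) − ∑_{y ≠ x} Q̃(x,y,t) ρ(x,t). -/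
/-!
By the product rule, `d/dt (p σ)(x)` is the forward generator of `Q` applied to `p`, times `σ(x)`,
plus `p(x)` times the backward generator of `Q` applied to `σ`. The diagonal terms
`Q(x,y) p(x) σ(x)` cancel between the two, and what remains,
`∑_{y ≠ x} Q(y,x) p(y) σ(x) - Q(x,y) p(x) σ(y)`, is the forward generator of the Doob transform
`σ(y)/σ(x) Q(x,y)` applied to `p σ`.
-/

open Finset

namespace MarkovJump

variable {S : Type*} [Fintype S] [DecidableEq S]

def masterRhs (R : S → S → ℝ) (p : S → ℝ) (x : S) : ℝ :=
  (∑ y ∈ univ.filter (fun y => y ≠ x), R y x * p y) - ∑ y ∈ univ.filter (fun y => y ≠ x), R x y * p x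

def backwardRhs (Q : S → S → ℝ) (σ : S → ℝ) (x : S) : ℝ :=
  -∑ y ∈ univ.filter (fun y => y ≠ x), Q x y * (σ y - σ x)

noncomputable def doobTransform (Q : S → S → ℝ) (σ : S → ℝ) (x y : S) : ℝ :=
  σ y / σ x * Q x y

theorem masterRhs_doobTransform (Q : S → S → ℝ) (σ p : S → ℝ) (hσ : ∀ y, σ y ≠ 0) (x : S) :
    masterRhs (doobTransform Q σ) (fun y => p y * σ y) x =
      masterRhs Q p x * σ x + p x * backwardRhs Q σ x := by
  have hin : ∀ y, doobTransform Q σ y x * (p y * σ y) = Q y x * p y * σ x := fun y => by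
    rw [doobTransform]; field_simp [hσ y]
  have hout : ∀ y, doobTransform Q σ x y * (p x * σ x) = Q x y * p x * σ y := fun y => by
    rw [doobTransform]; field_simp [hσ x]
  simp only [masterRhs, backwardRhs, hin, hout, sub_mul, sum_mul, mul_neg, mul_sum,
    ← sum_sub_distrib, ← sub_eq_add_neg]
  exact sum_congr rfl fun y _ => by ring

theorem hasDerivAt_mul_doobTransform {Q : S → S → ℝ} {σ p : S → ℝ → ℝ} {t : ℝ}
    (hσ : ∀ y, σ y t ≠ 0)
    (hσ' : ∀ x, HasDerivAt (σ x) (backwardRhs Q (σ · t) x) t)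
    (hp' : ∀ x, HasDerivAt (p x) (masterRhs Q (p · t) x) t) (x : S) :
    HasDerivAt (fun s => p x s * σ x s)
      (masterRhs (doobTransform Q (σ · t)) (fun y => p y t * σ y t) x) t := by
  rw [masterRhs_doobTransform Q (σ · t) (p · t) hσ]
  exact (hp' x).mul (hσ' x)

end MarkovJump

open MarkovJump in
theorem smoothed_weights_satisfy_posterior_master_equation_general
    {S : Type*} [Fintype S] [DecidableEq S]
    (Q : S → S → ℝ)
    (T : ℝ)
    (σ p : S → ℝ → ℝ)
    (hσpos : ∀ x : S, ∀ t ∈ Set.Icc (0 : ℝ) T, 0 < σ x t)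
    (hbackward : ∀ x : S, ∀ t ∈ Set.Icc (0 : ℝ) T,
      HasDerivAt (σ x)
        (-∑ y ∈ univ.filter (fun y => y ≠ x), Q x y * (σ y t - σ x t)) t)
    (hmaster : ∀ x : S, ∀ t ∈ Set.Icc (0 : ℝ) T,
      HasDerivAt (p x)
        ((∑ y ∈ univ.filter (fun y => y ≠ x), Q y x * p y t)
          - ∑ y ∈ univ.filter (fun y => y ≠ x), Q x y * p x t) t)
    (Qt : S → S → ℝ → ℝ)
    (hQt : ∀ x y : S, ∀ t : ℝ, Qt x y t = (σ y t / σ x t) * Q x y)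
    (ρ : S → ℝ → ℝ)
    (hρ : ∀ x : S, ∀ t : ℝ, ρ x t = p x t * σ x t) :
    ∀ x : S, ∀ t ∈ Set.Icc (0 : ℝ) T,
      HasDerivAt (ρ x)
        ((∑ y ∈ univ.filter (fun y => y ≠ x), Qt y x t * ρ y t)
          - ∑ y ∈ univ.filter (fun y => y ≠ x), Qt x y t * ρ x t) t := by
  intro x t ht
  have hQt' : (Qt · · t) = doobTransform Q (σ · t) := funext₂ fun x y => hQt x y t
  have hρ' : ρ = fun y s => p y s * σ y s := funext₂ hρ
  have key := hasDerivAt_mul_doobTransform (fun y => (hσpos y t ht).ne')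
    (fun y => hbackward y t ht) (fun y => hmaster y t ht) x
  subst hρ'
  rw [← hQt'] at key
  exact key

/-- The smoothed process of a Markov jump process is again a Markov jump process
with posterior rates `Q̃(x,y,t) = (σ(y,t)/σ(x,t)) Q(x,y)`:  if `σ` solves the
backward equation and `p` solves the master equation with rates `Q`, then the
unnormalized smoothed weights `ρ(x,t) = p(x,t) σ(x,t)` solve the master equation
with rates `Q̃`. -/
theorem smoothed_weights_satisfy_posterior_master_equation
    {S : Type*} [Fintype S] [DecidableEq S]
    (Q : S → S → ℝ) (hQ : ∀ x y : S, x ≠ y → 0 ≤ Q x y)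
    (T : ℝ) (hT : 0 < T)
    (σ p : S → ℝ → ℝ)
    (hσpos : ∀ x : S, ∀ t ∈ Set.Icc (0 : ℝ) T, 0 < σ x t)
    (hbackward : ∀ x : S, ∀ t ∈ Set.Icc (0 : ℝ) T,
      HasDerivAt (σ x)
        (-∑ y ∈ univ.filter (fun y => y ≠ x), Q x y * (σ y t - σ x t)) t)
    (hmaster : ∀ x : S, ∀ t ∈ Set.Icc (0 : ℝ) T,
      HasDerivAt (p x)
        ((∑ y ∈ univ.filter (fun y => y ≠ x), Q y x * p y t)
          - ∑ y ∈ univ.filter (fun y => y ≠ x), Q x y * p x t) t)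
    (Qt : S → S → ℝ → ℝ)
    (hQt : ∀ x y : S, ∀ t : ℝ, Qt x y t = (σ y t / σ x t) * Q x y)
    (ρ : S → ℝ → ℝ)
    (hρ : ∀ x : S, ∀ t : ℝ, ρ x t = p x t * σ x t) :
    ∀ x : S, ∀ t ∈ Set.Icc (0 : ℝ) T,
      HasDerivAt (ρ x)
        ((∑ y ∈ univ.filter (fun y => y ≠ x), Qt y x t * ρ y t)
          - ∑ y ∈ univ.filter (fun y => y ≠ x), Qt x y t * ρ x t) t :=
  smoothed_weights_satisfy_posterior_master_equation_general Q T σ p hσpos hbackward hmaster Qt hQt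
    ρ hρ
end

section
/- Let S be a finite set, let Q : S × S → ℝ satisfy Q(x,y) ≥ 0 for x ≠ y, and let T > 0. Suppose σ : S → ℝ → ℝ is positive on S × [0,T] and satisfies the backward equation with rates Q, p : S → ℝ → ℝ is nonnegative, not identically zero at each time, and satisfies the master equation with rates Q (as in the previous statements). Define the normalized smoothed distribution p̃(x,t) := p(x,t) σ(x,t) / (∑_{y ∈ S} p(y,t) σ(y,t)), assuming the denominator is positive. Then p̃ satisfies the master equation with the posterior rates Q̃(x,y,t) = (σ(y,t)/σ(x,t)) Q(x,y): for every x and t ∈ [0,T], d/dt p̃(x,t) = ∑_{y ≠ x} Q̃(y,x,t) p̃(y,t) − ∑_{y ≠ x} Q̃(x,y,t) p̃(x,t). -/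
/-!
The product `p σ` of a solution of the master equation and a solution of the backward equation
solves the master equation with the posterior rates `σ(y) / σ(x) Q(x,y)`: the terms of the
product rule in which `σ(x)` multiplies the loss of `p` cancel against those of the backward
equation. Every master equation conserves total mass, so `∑ p σ` is constant in time, and dividing
by this constant preserves the equation.
-/

open Finset

section Generators

variable {S : Type*} [Fintype S] [DecidableEq S]

/-- Right-hand side of the master equation `q' = forwardGenerator R q`. -/
def forwardGenerator (R : S → S → ℝ) (q : S → ℝ) (x : S) : ℝ :=
  (∑ y ∈ univ.filter (fun y => y ≠ x), R y x * q y)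
    - ∑ y ∈ univ.filter (fun y => y ≠ x), R x y * q x

/-- The backward equation reads `f' = -backwardGenerator R f`. -/
def backwardGenerator (R : S → S → ℝ) (f : S → ℝ) (x : S) : ℝ :=
  ∑ y ∈ univ.filter (fun y => y ≠ x), R x y * (f y - f x)

theorem forwardGenerator_eq_sum (R : S → S → ℝ) (q : S → ℝ) (x : S) :
    forwardGenerator R q x = ∑ y, (R y x * q y - R x y * q x) := by
  rw [forwardGenerator, ← sum_sub_distrib]
  refine sum_subset (filter_subset _ _) fun y _ hy => ?_
  obtain rfl : y = x := by simpa using hy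
  ring

theorem sum_forwardGenerator (R : S → S → ℝ) (q : S → ℝ) :
    ∑ x, forwardGenerator R q x = 0 := by
  simp_rw [forwardGenerator_eq_sum, sum_sub_distrib]
  rw [sum_comm]
  ring

theorem forwardGenerator_div_const (R : S → S → ℝ) (q : S → ℝ) (c : ℝ) (x : S) :
    forwardGenerator R (fun y => q y / c) x = forwardGenerator R q x / c := by
  simp only [forwardGenerator, sub_div, sum_div, mul_div_assoc]

theorem forwardGenerator_mul_sub_mul_backwardGenerator (Q : S → S → ℝ) (p σ : S → ℝ)
    (hσ : ∀ y, σ y ≠ 0) (x : S) :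
    forwardGenerator Q p x * σ x - p x * backwardGenerator Q σ x
      = forwardGenerator (fun x y => σ y / σ x * Q x y) (fun y => p y * σ y) x := by
  simp only [forwardGenerator, backwardGenerator, sub_mul, sum_mul, mul_sum, ← sum_sub_distrib]
  refine sum_congr rfl fun y _ => ?_
  field_simp [hσ x, hσ y]
  ring

theorem hasDerivAt_mul_of_forward_of_backward {Q : S → S → ℝ} {p σ : S → ℝ → ℝ} {t : ℝ} {x : S}
    (hp : HasDerivAt (p x) (forwardGenerator Q (p · t) x) t)
    (hσ : HasDerivAt (σ x) (-backwardGenerator Q (σ · t) x) t) (hσ0 : ∀ y, σ y t ≠ 0) :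
    HasDerivAt (fun s => p x s * σ x s)
      (forwardGenerator (fun x y => σ y t / σ x t * Q x y) (fun y => p y t * σ y t) x) t := by
  rw [← forwardGenerator_mul_sub_mul_backwardGenerator Q (p · t) (σ · t) hσ0, sub_eq_add_neg,
    ← mul_neg]
  exact hp.mul hσ

theorem hasDerivAt_sum_of_forward {R : S → S → ℝ} {q : S → ℝ → ℝ} {t : ℝ}
    (hq : ∀ x, HasDerivAt (q x) (forwardGenerator R (q · t) x) t) :
    HasDerivAt (fun s => ∑ x, q x s) 0 t := by
  rw [← sum_forwardGenerator R (q · t)]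
  exact HasDerivAt.fun_sum fun x _ => hq x

theorem hasDerivAt_div_sum_of_forward {R : S → S → ℝ} {q : S → ℝ → ℝ} {t : ℝ}
    (hq : ∀ x, HasDerivAt (q x) (forwardGenerator R (q · t) x) t) (hN : ∑ y, q y t ≠ 0)
    (x : S) :
    HasDerivAt (fun s => q x s / ∑ y, q y s)
      (forwardGenerator R (fun y => q y t / ∑ z, q z t) x) t := by
  refine ((hq x).fun_div (hasDerivAt_sum_of_forward hq) hN).congr_deriv ?_
  rw [forwardGenerator_div_const]
  field_simp
  ring

end Generators

theorem normalized_smoothed_distribution_satisfies_posterior_master_equation_general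
    {S : Type*} [Fintype S] [DecidableEq S]
    (Q : S → S → ℝ)
    (T : ℝ)
    (σ p : S → ℝ → ℝ)
    (hσpos : ∀ x : S, ∀ t ∈ Set.Icc (0 : ℝ) T, 0 < σ x t)
    (hbackward : ∀ x : S, ∀ t ∈ Set.Icc (0 : ℝ) T,
      HasDerivAt (σ x)
        (-∑ y ∈ univ.filter (fun y => y ≠ x), Q x y * (σ y t - σ x t)) t)
    (hmaster : ∀ x : S, ∀ t ∈ Set.Icc (0 : ℝ) T,
      HasDerivAt (p x)
        ((∑ y ∈ univ.filter (fun y => y ≠ x), Q y x * p y t)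
          - ∑ y ∈ univ.filter (fun y => y ≠ x), Q x y * p x t) t)
    (hden : ∀ t ∈ Set.Icc (0 : ℝ) T, 0 < ∑ y : S, p y t * σ y t)
    (Qt : S → S → ℝ → ℝ)
    (hQt : ∀ x y : S, ∀ t : ℝ, Qt x y t = (σ y t / σ x t) * Q x y)
    (ptil : S → ℝ → ℝ)
    (hptil : ∀ x : S, ∀ t : ℝ,
      ptil x t = p x t * σ x t / ∑ y : S, p y t * σ y t) :
    ∀ x : S, ∀ t ∈ Set.Icc (0 : ℝ) T,
      HasDerivAt (ptil x)
        ((∑ y ∈ univ.filter (fun y => y ≠ x), Qt y x t * ptil y t)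
          - ∑ y ∈ univ.filter (fun y => y ≠ x), Qt x y t * ptil x t) t := by
  intro x t ht
  have hQt_t : (Qt · · t) = fun x y => σ y t / σ x t * Q x y := funext₂ fun x y => hQt x y t
  have hsmoothed : ∀ y, HasDerivAt (fun s => p y s * σ y s)
      (forwardGenerator (Qt · · t) (fun z => p z t * σ z t) y) t := fun y => by
    rw [hQt_t]
    exact hasDerivAt_mul_of_forward_of_backward (hmaster y t ht) (hbackward y t ht)
      fun z => (hσpos z t ht).ne'
  have hptil_eq : ptil = fun y s => p y s * σ y s / ∑ z, p z s * σ z s :=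
    funext₂ hptil
  subst hptil_eq
  exact hasDerivAt_div_sum_of_forward hsmoothed (hden t ht).ne' x

/-- The normalized smoothed distribution
`p̃(x,t) = p(x,t) σ(x,t) / ∑_y p(y,t) σ(y,t)` satisfies the master equation with
the posterior rates `Q̃(x,y,t) = (σ(y,t)/σ(x,t)) Q(x,y)`. -/
theorem normalized_smoothed_distribution_satisfies_posterior_master_equation
    {S : Type*} [Fintype S] [DecidableEq S]
    (Q : S → S → ℝ) (hQ : ∀ x y : S, x ≠ y → 0 ≤ Q x y)
    (T : ℝ) (hT : 0 < T)
    (σ p : S → ℝ → ℝ)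
    (hσpos : ∀ x : S, ∀ t ∈ Set.Icc (0 : ℝ) T, 0 < σ x t)
    (hppos : ∀ x : S, ∀ t ∈ Set.Icc (0 : ℝ) T, 0 ≤ p x t)
    (hpnontriv : ∀ t ∈ Set.Icc (0 : ℝ) T, ∃ x : S, p x t ≠ 0)
    (hbackward : ∀ x : S, ∀ t ∈ Set.Icc (0 : ℝ) T,
      HasDerivAt (σ x)
        (-∑ y ∈ univ.filter (fun y => y ≠ x), Q x y * (σ y t - σ x t)) t)
    (hmaster : ∀ x : S, ∀ t ∈ Set.Icc (0 : ℝ) T,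
      HasDerivAt (p x)
        ((∑ y ∈ univ.filter (fun y => y ≠ x), Q y x * p y t)
          - ∑ y ∈ univ.filter (fun y => y ≠ x), Q x y * p x t) t)
    (hden : ∀ t ∈ Set.Icc (0 : ℝ) T, 0 < ∑ y : S, p y t * σ y t)
    (Qt : S → S → ℝ → ℝ)
    (hQt : ∀ x y : S, ∀ t : ℝ, Qt x y t = (σ y t / σ x t) * Q x y)
    (ptil : S → ℝ → ℝ)
    (hptil : ∀ x : S, ∀ t : ℝ,
      ptil x t = p x t * σ x t / ∑ y : S, p y t * σ y t) :
    ∀ x : S, ∀ t ∈ Set.Icc (0 : ℝ) T,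
      HasDerivAt (ptil x)
        ((∑ y ∈ univ.filter (fun y => y ≠ x), Qt y x t * ptil y t)
          - ∑ y ∈ univ.filter (fun y => y ≠ x), Qt x y t * ptil x t) t :=
  normalized_smoothed_distribution_satisfies_posterior_master_equation_general Q T σ p hσpos
    hbackward hmaster hden Qt hQt ptil hptil
end

section
/- Let S be a finite set, T > 0, and let Q : S × S → ℝ satisfy Q(x,y) > 0 for all x ≠ y. Suppose σ : S → ℝ → ℝ is positive on S × [0,T] and satisfies the backward equation with rates Q. Suppose p : S → ℝ → ℝ satisfies the master equation with the time-dependent rates λ : S × S × [0,T] → ℝ, where λ(x,y,t) > 0 for x ≠ y. Define the posterior rates Q̃(x,y,t) = (σ(y,t)/σ(x,t)) Q(x,y). Then for every t ∈ [0,T], the Kullback–Leibler integrands satisfy the decomposition: ∑_{x} p(x,t) ∑_{y ≠ x} [ Q̃(x,y,t) − λ(x,y,t) + λ(x,y,t) · log( λ(x,y,t) / Q̃(x,y,t) ) ] = ∑_{x} p(x,t) ∑_{y ≠ x} [ Q(x,y) − λ(x,y,t) + λ(x,y,t) · log( λ(x,y,t) / Q(x,y) ) ] − d/dt ( ∑_{x}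 p(x,t) · log σ(x,t) ). -/
/-!
Writing `Q̃ = (σ_y/σ_x) Q`, each posterior term differs from the prior one by
`(Q̃ - Q) - λ (log σ_y - log σ_x)`. Differentiating `∑ₓ p log σ` gives a master-equation part,
which after exchanging the double sum is `∑ₓ p ∑_y λ (log σ_y - log σ_x)`, and a
backward-equation part, which is `-∑ₓ p ∑_y (Q̃ - Q)`; so the two differences add up to minus
the derivative.
-/

open Finset Real

section

variable {S : Type*} [Fintype S] [DecidableEq S]

lemma sum_sum_ne_comm (F : S → S → ℝ) :
    ∑ x : S, ∑ y ∈ univ.filter (fun y => y ≠ x), F x y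
      = ∑ x : S, ∑ y ∈ univ.filter (fun y => y ≠ x), F y x :=
  sum_comm' fun x y => by simp [ne_comm]

lemma sum_master_mul_eq (lam : S → S → ℝ) (p f : S → ℝ) :
    ∑ x : S, ((∑ y ∈ univ.filter (fun y => y ≠ x), lam y x * p y)
        - ∑ y ∈ univ.filter (fun y => y ≠ x), lam x y * p x) * f x
      = ∑ x : S, p x * ∑ y ∈ univ.filter (fun y => y ≠ x), lam x y * (f y - f x) := by
  have inflow := sum_sum_ne_comm fun x y => lam y x * p y * f x
  simp only [sub_mul, sum_mul, mul_sub, mul_sum, sum_sub_distrib] at inflow ⊢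
  rw [inflow]
  congr 1 <;> exact sum_congr rfl fun x _ => sum_congr rfl fun y _ => by ring

end

lemma hasDerivAt_sum_mul_log {S : Type*} [Fintype S] {p σ : S → ℝ → ℝ} {p' σ' : S → ℝ} {t : ℝ}
    (hp : ∀ x, HasDerivAt (p x) (p' x) t) (hσ : ∀ x, HasDerivAt (σ x) (σ' x) t)
    (hσ0 : ∀ x, σ x t ≠ 0) :
    HasDerivAt (fun s => ∑ x : S, p x s * log (σ x s))
      (∑ x : S, (p' x * log (σ x t) + p x t * (σ' x / σ x t))) t :=
  HasDerivAt.fun_sum fun x _ => (hp x).mul ((hσ x).log (hσ0 x))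

lemma mul_log_div_mul (x : ℝ) {a q : ℝ} (ha : a ≠ 0) (hq : q ≠ 0) :
    x * log (x / (a * q)) = x * log (x / q) - x * log a := by
  rcases eq_or_ne x 0 with rfl | hx
  · simp
  · rw [log_div hx (mul_ne_zero ha hq), log_mul ha hq, log_div hx hq]
    ring

theorem kl_integrand_decomposition_general
    {S : Type*} [Fintype S] [DecidableEq S]
    (Q : S → S → ℝ) (hQ : ∀ x y : S, x ≠ y → 0 < Q x y)
    (T : ℝ)
    (σ p : S → ℝ → ℝ) (lam : S → S → ℝ → ℝ)
    (hσpos : ∀ x : S, ∀ t ∈ Set.Icc (0 : ℝ) T, 0 < σ x t)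
    (hbackward : ∀ x : S, ∀ t ∈ Set.Icc (0 : ℝ) T,
      HasDerivAt (σ x)
        (-∑ y ∈ univ.filter (fun y => y ≠ x), Q x y * (σ y t - σ x t)) t)
    (hmaster : ∀ x : S, ∀ t ∈ Set.Icc (0 : ℝ) T,
      HasDerivAt (p x)
        ((∑ y ∈ univ.filter (fun y => y ≠ x), lam y x t * p y t)
          - ∑ y ∈ univ.filter (fun y => y ≠ x), lam x y t * p x t) t)
    (Qt : S → S → ℝ → ℝ)
    (hQt : ∀ x y : S, ∀ t : ℝ, Qt x y t = (σ y t / σ x t) * Q x y) :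
    ∀ t ∈ Set.Icc (0 : ℝ) T,
      (∑ x : S, p x t * ∑ y ∈ univ.filter (fun y => y ≠ x),
          (Qt x y t - lam x y t + lam x y t * Real.log (lam x y t / Qt x y t)))
        = (∑ x : S, p x t * ∑ y ∈ univ.filter (fun y => y ≠ x),
            (Q x y - lam x y t + lam x y t * Real.log (lam x y t / Q x y)))
          - deriv (fun s => ∑ x : S, p x s * Real.log (σ x s)) t := by
  intro t ht
  have hσ0 x : σ x t ≠ 0 := (hσpos x t ht).ne'
  have hderiv : HasDerivAt (fun s => ∑ x : S, p x s * log (σ x s))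
      (∑ x : S, p x t * ∑ y ∈ univ.filter (fun y => y ≠ x),
        (lam x y t * (log (σ y t) - log (σ x t)) - (Qt x y t - Q x y))) t := by
    convert hasDerivAt_sum_mul_log (hmaster · t ht) (hbackward · t ht) hσ0 using 1
    rw [sum_add_distrib, sum_master_mul_eq, ← sum_add_distrib]
    refine sum_congr rfl fun x _ => ?_
    rw [sum_sub_distrib, mul_sub, sub_eq_add_neg, neg_div, sum_div, mul_neg]
    congr 3
    exact sum_congr rfl fun y _ => by rw [hQt, mul_div_assoc, sub_div, div_self (hσ0 x)]; ring
  rw [hderiv.deriv, ← sum_sub_distrib]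
  refine sum_congr rfl fun x _ => ?_
  rw [← mul_sub, ← sum_sub_distrib]
  congr 1
  refine sum_congr rfl fun y hy => ?_
  have hQ0 : Q x y ≠ 0 := (hQ x y (mem_filter.mp hy).2.symm).ne'
  rw [hQt, mul_log_div_mul _ (div_ne_zero (hσ0 y) (hσ0 x)) hQ0, log_div (hσ0 y) (hσ0 x)]
  ring

/-- Pointwise-in-time core of the KL-divergence decomposition
`KL(P^Z ‖ P^posterior) = KL(P^Z ‖ P^prior) − d/dt E[log σ(Z(t),t)]`:
the KL integrand towards the posterior rates `Q̃(x,y,t) = (σ(y,t)/σ(x,t)) Q(x,y)`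
equals the KL integrand towards the prior rates `Q` minus the time derivative of
`∑_x p(x,t) log σ(x,t)`. -/
theorem kl_integrand_decomposition
    {S : Type*} [Fintype S] [DecidableEq S]
    (Q : S → S → ℝ) (hQ : ∀ x y : S, x ≠ y → 0 < Q x y)
    (T : ℝ) (hT : 0 < T)
    (σ p : S → ℝ → ℝ) (lam : S → S → ℝ → ℝ)
    (hσpos : ∀ x : S, ∀ t ∈ Set.Icc (0 : ℝ) T, 0 < σ x t)
    (hlampos : ∀ x y : S, x ≠ y → ∀ t ∈ Set.Icc (0 : ℝ) T, 0 < lam x y t)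
    (hbackward : ∀ x : S, ∀ t ∈ Set.Icc (0 : ℝ) T,
      HasDerivAt (σ x)
        (-∑ y ∈ univ.filter (fun y => y ≠ x), Q x y * (σ y t - σ x t)) t)
    (hmaster : ∀ x : S, ∀ t ∈ Set.Icc (0 : ℝ) T,
      HasDerivAt (p x)
        ((∑ y ∈ univ.filter (fun y => y ≠ x), lam y x t * p y t)
          - ∑ y ∈ univ.filter (fun y => y ≠ x), lam x y t * p x t) t)
    (Qt : S → S → ℝ → ℝ)
    (hQt : ∀ x y : S, ∀ t : ℝ, Qt x y t = (σ y t / σ x t) * Q x y) :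
    ∀ t ∈ Set.Icc (0 : ℝ) T,
      (∑ x : S, p x t * ∑ y ∈ univ.filter (fun y => y ≠ x),
          (Qt x y t - lam x y t + lam x y t * Real.log (lam x y t / Qt x y t)))
        = (∑ x : S, p x t * ∑ y ∈ univ.filter (fun y => y ≠ x),
            (Q x y - lam x y t + lam x y t * Real.log (lam x y t / Q x y)))
          - deriv (fun s => ∑ x : S, p x s * Real.log (σ x s)) t :=
  kl_integrand_decomposition_general Q hQ T σ p lam hσpos hbackward hmaster Qt hQt
end

section
/- Let S be a finite set, let c : S → Fin s be a surjective labelling (defining the state-space partition Π_i = c⁻¹{i}), and let Q : S × S → ℝ with Q(x,y) ≥ 0 for x ≠ y. Assume the lumpability condition: there exists Q̃ : Fin s → Fin s → ℝ such that for all i ≠ j and every x with c(x) = i, ∑_{y : c(y) = j} Q(x,y) = Q̃(i,j). Let λ : Fin s → Fin s → ℝ → ℝ, and suppose p : S → ℝ → ℝ satisfies the master equation with the time-dependent rates R(x,y,t) = λ(c(x), c(y), t) · Q(x,y) for x ≠ y. Define the lumped probabilities s_i(t) = ∑_{x : c(x) = i} p(x,t). Then for every i and t: d/dt s_i(t) =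 ∑_{l ≠ i} λ(l,i,t) · Q̃(l,i) · s_l(t) − ∑_{l ≠ i} λ(i,l,t) · Q̃(i,l) · s_i(t); that is, the lumped probabilities satisfy the master equation of the lumped chain with rates λ(i,j,t) Q̃(i,j). -/
/-!
Summing the master equation over a class `Π_i`, every flux between two states of `Π_i` appears
once as a gain and once as a loss, so only the fluxes across the boundary of `Π_i` survive.
All transitions from `Π_l` into `Π_i` are scaled by the same factor `λ(l,i,t)`, and lumpability
says that the total rate of such transitions out of any fixed state of `Π_l` is `Q̃(l,i)`; hence the
boundary fluxes depend on `p` only through the lumped probabilities.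
-/

open Finset

section Fluxes

variable {S M : Type*} [Fintype S] [DecidableEq S] [AddCommGroup M]

lemma sum_sub_sum_ne_eq_sum (F : S → S → M) (x : S) :
    ∑ y ∈ univ.filter (fun y => y ≠ x), F y x - ∑ y ∈ univ.filter (fun y => y ≠ x), F x y
      = ∑ y, (F y x - F x y) := by
  rw [← sum_sub_distrib, filter_ne',
    Finset.sum_erase (f := fun y => F y x - F x y) univ (sub_self _)]

omit [Fintype S] [DecidableEq S] in
lemma sum_sum_sub_eq_zero (A : Finset S) (F : S → S → M) :
    ∑ x ∈ A, ∑ y ∈ A, (F y x - F x y) = 0 := by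
  simp only [sum_sub_distrib]
  rw [sum_comm, sub_self]

theorem sum_net_inflow_eq_sum_boundary_flux (A : Finset S) (F : S → S → M) :
    ∑ x ∈ A, (∑ y ∈ univ.filter (fun y => y ≠ x), F y x
        - ∑ y ∈ univ.filter (fun y => y ≠ x), F x y)
      = ∑ x ∈ A, ∑ y ∈ Aᶜ, (F y x - F x y) := by
  simp only [sum_sub_sum_ne_eq_sum, ← sum_add_sum_compl A, sum_add_distrib,
    sum_sum_sub_eq_zero, zero_add]

end Fluxes

section Lumping

variable {S κ R : Type*} [Fintype S] [Fintype κ] [DecidableEq κ] [CommSemiring R]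

lemma sum_filter_ne_mul_eq_sum_mul_sum_fiber (c : S → κ) (i : κ) (g : κ → R) (q : S → R) :
    ∑ y ∈ univ.filter (fun y => c y ≠ i), g (c y) * q y
      = ∑ l ∈ univ.filter (fun l => l ≠ i), g l * ∑ y ∈ univ.filter (fun y => c y = l), q y := by
  calc ∑ y ∈ univ.filter (fun y => c y ≠ i), g (c y) * q y
      = ∑ y ∈ univ.filter (fun y => c y ∈ univ.filter (fun l => l ≠ i)), g (c y) * q y := by
        simp only [mem_filter, mem_univ, true_and]
    _ = ∑ l ∈ univ.filter (fun l => l ≠ i), ∑ y ∈ univ.filter (fun y => c y = l), g (c y) * q y :=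
        (sum_fiberwise_eq_sum_filter _ _ _ _).symm
    _ = _ := by
        simp only [mul_sum]
        exact sum_congr rfl fun l _ => sum_congr rfl fun y hy => by rw [(mem_filter.1 hy).2]

def IsLumpable (c : S → κ) (Q : S → S → R) (Qlump : κ → κ → R) : Prop :=
  ∀ i j, i ≠ j → ∀ x, c x = i → ∑ y ∈ univ.filter (fun y => c y = j), Q x y = Qlump i j

variable {c : S → κ} {Q : S → S → R} {Qlump : κ → κ → R}

theorem IsLumpable.sum_filter_ne_mul (h : IsLumpable c Q Qlump) {i : κ} {x : S} (hx : c x = i)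
    (g : κ → R) :
    ∑ y ∈ univ.filter (fun y => c y ≠ i), g (c y) * Q x y
      = ∑ l ∈ univ.filter (fun l => l ≠ i), g l * Qlump i l := by
  rw [sum_filter_ne_mul_eq_sum_mul_sum_fiber]
  exact sum_congr rfl fun l hl => by rw [h i l (mem_filter.1 hl).2.symm x hx]

theorem IsLumpable.sum_sum_inflow (h : IsLumpable c Q Qlump) (i : κ) (w : κ → κ → R)
    (q : S → R) :
    ∑ x ∈ univ.filter (fun x => c x = i), ∑ y ∈ univ.filter (fun y => c y ≠ i),
        w (c y) (c x) * Q y x * q y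
      = ∑ l ∈ univ.filter (fun l => l ≠ i),
          w l i * Qlump l i * ∑ y ∈ univ.filter (fun y => c y = l), q y := by
  rw [sum_comm, ← sum_filter_ne_mul_eq_sum_mul_sum_fiber]
  refine sum_congr rfl fun y hy => ?_
  rw [← h (c y) i (mem_filter.1 hy).2 y rfl, mul_sum, sum_mul]
  exact sum_congr rfl fun x hx => by rw [(mem_filter.1 hx).2]

theorem IsLumpable.sum_sum_outflow (h : IsLumpable c Q Qlump) (i : κ) (w : κ → κ → R)
    (q : S → R) :
    ∑ x ∈ univ.filter (fun x => c x = i), ∑ y ∈ univ.filter (fun y => c y ≠ i),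
        w (c x) (c y) * Q x y * q x
      = ∑ l ∈ univ.filter (fun l => l ≠ i),
          w i l * Qlump i l * ∑ x ∈ univ.filter (fun x => c x = i), q x := by
  calc _ = ∑ x ∈ univ.filter (fun x => c x = i),
          (∑ l ∈ univ.filter (fun l => l ≠ i), w i l * Qlump i l) * q x :=
        sum_congr rfl fun x hx => by
          rw [← sum_mul, (mem_filter.1 hx).2, h.sum_filter_ne_mul (mem_filter.1 hx).2]
    _ = _ := by
        simp only [mul_sum, sum_mul]
        exact sum_comm

end Lumping

theorem lumped_probabilities_satisfy_lumped_master_equation_general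
    {S : Type*} [Fintype S] [DecidableEq S]
    {s : ℕ} (c : S → Fin s)
    (Q : S → S → ℝ)
    (Qlump : Fin s → Fin s → ℝ)
    (hlumpable : ∀ i j : Fin s, i ≠ j → ∀ x : S, c x = i →
      (∑ y ∈ univ.filter (fun y => c y = j), Q x y) = Qlump i j)
    (lam : Fin s → Fin s → ℝ → ℝ)
    (p : S → ℝ → ℝ)
    (hmaster : ∀ x : S, ∀ t : ℝ,
      HasDerivAt (p x)
        ((∑ y ∈ univ.filter (fun y => y ≠ x), lam (c y) (c x) t * Q y x * p y t)
          - ∑ y ∈ univ.filter (fun y => y ≠ x), lam (c x) (c y) t * Q x y * p x t) t)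
    (slump : Fin s → ℝ → ℝ)
    (hslump : ∀ i : Fin s, ∀ t : ℝ,
      slump i t = ∑ x ∈ univ.filter (fun x => c x = i), p x t) :
    ∀ i : Fin s, ∀ t : ℝ,
      HasDerivAt (slump i)
        ((∑ l ∈ univ.filter (fun l => l ≠ i), lam l i t * Qlump l i * slump l t)
          - ∑ l ∈ univ.filter (fun l => l ≠ i), lam i l t * Qlump i l * slump i t) t := by
  intro i t
  have hlump : IsLumpable c Q Qlump := hlumpable
  rw [show slump i = fun τ => ∑ x ∈ univ.filter (fun x => c x = i), p x τ from funext (hslump i)]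
  simp only [hslump]
  refine (HasDerivAt.fun_sum fun x _ => hmaster x t).congr_deriv ?_
  rw [sum_net_inflow_eq_sum_boundary_flux, compl_filter]
  simp only [sum_sub_distrib]
  rw [hlump.sum_sum_inflow i (fun a b => lam a b t) (fun y => p y t),
    hlump.sum_sum_outflow i (fun a b => lam a b t) (fun y => p y t)]

/-- Under the lumpability condition, the lumped probabilities
`s_i(t) = ∑_{x : c(x)=i} p(x,t)` of the variational process with rates
`λ(c(x),c(y),t) Q(x,y)` satisfy the master equation of the lumped chain with
rates `λ(i,j,t) Q̃(i,j)`. -/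
theorem lumped_probabilities_satisfy_lumped_master_equation
    {S : Type*} [Fintype S] [DecidableEq S]
    {s : ℕ} (c : S → Fin s) (hc : Function.Surjective c)
    (Q : S → S → ℝ) (hQ : ∀ x y : S, x ≠ y → 0 ≤ Q x y)
    (Qlump : Fin s → Fin s → ℝ)
    (hlumpable : ∀ i j : Fin s, i ≠ j → ∀ x : S, c x = i →
      (∑ y ∈ univ.filter (fun y => c y = j), Q x y) = Qlump i j)
    (lam : Fin s → Fin s → ℝ → ℝ)
    (p : S → ℝ → ℝ)
    (hmaster : ∀ x : S, ∀ t : ℝ,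
      HasDerivAt (p x)
        ((∑ y ∈ univ.filter (fun y => y ≠ x), lam (c y) (c x) t * Q y x * p y t)
          - ∑ y ∈ univ.filter (fun y => y ≠ x), lam (c x) (c y) t * Q x y * p x t) t)
    (slump : Fin s → ℝ → ℝ)
    (hslump : ∀ i : Fin s, ∀ t : ℝ,
      slump i t = ∑ x ∈ univ.filter (fun x => c x = i), p x t) :
    ∀ i : Fin s, ∀ t : ℝ,
      HasDerivAt (slump i)
        ((∑ l ∈ univ.filter (fun l => l ≠ i), lam l i t * Qlump l i * slump l t)
          - ∑ l ∈ univ.filter (fun l => l ≠ i), lam i l t * Qlump i l * slump i t) t :=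
  lumped_probabilities_satisfy_lumped_master_equation_general c Q Qlump hlumpable lam p hmaster
    slump hslump
end

section
/- Let d, r ∈ ℕ, and consider a population-type jump process on the lattice ℤ^d with change vectors v₁, …, v_r ∈ ℤ^d (pairwise distinct and nonzero) and affine propensities h_j(x) = β_j + ⟨α_j, x⟩ for α_j ∈ ℝ^d, β_j ∈ ℝ. Let λ₁, …, λ_r : ℝ → ℝ, and suppose p : ℤ^d → ℝ → ℝ satisfies the master equation with rates R(x, x+v_j, t) = λ_j(t) h_j(x) (and R(x,y,t) = 0 if y − x is not one of the v_j): for every x and t, d/dt p(x,t) = ∑_{j=1}^r λ_j(t) h_j(x − v_j) p(x − v_j, t) − ∑_{j=1}^r λ_j(t) h_j(x) p(x,t). Assume for each t: (i) ∑_x |p(x,t)| · (1 + |h_i(x)|)·(1 + |h_j(x)|) < ∞ for all i, j; (ii) the natural moments φ_i(t) := ∑_x h_i(x) p(x,t) are differentiable with d/dt φ_i(t) = ∑_x h_i(x) ∂_t p(x,t). Then the moment equations are closed: for every i and t, d/dt φ_i(t) = ∑_{j=1}^r λ_j(t) · ⟨α_i, v_j⟩ · φ_j(t). -/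
/-!
Multiplying the master equation by `h_i` and shifting the summation index in the gain terms
turns `∑_x h_i(x) ∂_t p(x,t)` into `∑_j λ_j(t) ∑_x (h_i(x + v_j) - h_i(x)) h_j(x) p(x,t)`.
For affine `h_i` the increment `h_i(x + v_j) - h_i(x) = ⟨α_i, v_j⟩` does not depend on `x`,
so the inner sum is `⟨α_i, v_j⟩ φ_j(t)`. The second-moment bound makes every series involved
absolutely summable.
-/

open Finset

section Summability

variable {X : Type*} {f g p : X → ℝ}

theorem summable_mul_of_summable_abs_mul_one_add_mul_one_add
    (hs : Summable fun x => |p x| * (1 + |f x|) * (1 + |g x|)) :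
    Summable fun x => g x * p x := by
  refine hs.of_norm_bounded fun x => ?_
  rw [Real.norm_eq_abs, abs_mul]
  have := mul_nonneg (abs_nonneg (p x)) (abs_nonneg (f x))
  nlinarith [abs_nonneg (g x), abs_nonneg (p x)]

theorem summable_mul_mul_of_summable_abs_mul_one_add_mul_one_add
    (hs : Summable fun x => |p x| * (1 + |f x|) * (1 + |g x|)) :
    Summable fun x => f x * (g x * p x) := by
  refine hs.of_norm_bounded fun x => ?_
  rw [Real.norm_eq_abs, abs_mul, abs_mul]
  have := mul_nonneg (abs_nonneg (p x)) (abs_nonneg (f x))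
  nlinarith [abs_nonneg (g x), abs_nonneg (p x), mul_nonneg this (abs_nonneg (g x))]

end Summability

theorem hasSum_mul_sub_comp_sub {G : Type*} [AddGroup G] {f q : G → ℝ} {v : G} {a b : ℝ}
    (ha : HasSum (fun x => f (x + v) * q x) a) (hb : HasSum (fun x => f x * q x) b) :
    HasSum (fun x => f x * (q (x - v) - q x)) (a - b) := by
  have hgain : HasSum (fun x => f x * q (x - v)) a := by
    rw [← (Equiv.addRight v).hasSum_iff]
    simpa [Function.comp_def] using ha
  simpa only [mul_sub] using hgain.sub hb

theorem hasSum_mul_sub_comp_sub_of_add_eq_add_const {G : Type*} [AddGroup G] {f q : G → ℝ}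
    {v : G} {c m : ℝ} (hf : ∀ x, f (x + v) = f x + c) (hfq : Summable fun x => f x * q x)
    (hq : HasSum q m) :
    HasSum (fun x => f x * (q (x - v) - q x)) (c * m) := by
  have ha : HasSum (fun x => f (x + v) * q x) ((∑' x, f x * q x) + c * m) := by
    simpa only [hf, add_mul] using hfq.hasSum.add (hq.mul_left c)
  simpa using hasSum_mul_sub_comp_sub ha hfq.hasSum

theorem add_eq_add_sum_mul_of_eq_add_sum_mul {d : ℕ} {f : (Fin d → ℤ) → ℝ} {a : Fin d → ℝ}
    {b : ℝ} (hf : ∀ x, f x = b + ∑ k, a k * (x k : ℝ)) (x v : Fin d → ℤ) :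
    f (x + v) = f x + ∑ k, a k * (v k : ℝ) := by
  simp only [hf, Pi.add_apply, Int.cast_add, mul_add, sum_add_distrib]
  ring

theorem affine_propensities_moment_equations_closed_general
    (d r : ℕ)
    (v : Fin r → (Fin d → ℤ))
    (α : Fin r → (Fin d → ℝ)) (β : Fin r → ℝ)
    (h : Fin r → (Fin d → ℤ) → ℝ)
    (hh : ∀ j : Fin r, ∀ x : Fin d → ℤ,
      h j x = β j + ∑ k : Fin d, α j k * (x k : ℝ))
    (lam : Fin r → ℝ → ℝ)
    (p p' : (Fin d → ℤ) → ℝ → ℝ)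
    (hmaster : ∀ x : Fin d → ℤ, ∀ t : ℝ,
      p' x t = (∑ j : Fin r, lam j t * h j (x - v j) * p (x - v j) t)
        - ∑ j : Fin r, lam j t * h j x * p x t)
    (hsummable : ∀ t : ℝ, ∀ i j : Fin r,
      Summable (fun x : Fin d → ℤ =>
        |p x t| * (1 + |h i x|) * (1 + |h j x|)))
    (φ : Fin r → ℝ → ℝ)
    (hφ : ∀ i : Fin r, ∀ t : ℝ, φ i t = ∑' x : Fin d → ℤ, h i x * p x t)
    (hφderiv : ∀ i : Fin r, ∀ t : ℝ,
      HasDerivAt (φ i) (∑' x : Fin d → ℤ, h i x * p' x t) t) :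
    ∀ i : Fin r, ∀ t : ℝ,
      HasDerivAt (φ i)
        (∑ j : Fin r, lam j t * (∑ k : Fin d, α i k * (v j k : ℝ)) * φ j t) t := by
  intro i t
  have hmoment : ∀ j, HasSum (fun x => h j x * p x t) (φ j t) := fun j => by
    rw [hφ j t]
    exact (summable_mul_of_summable_abs_mul_one_add_mul_one_add (hsummable t i j)).hasSum
  have hjump : ∀ j, HasSum (fun x => lam j t * (h i x * (h j (x - v j) * p (x - v j) t
      - h j x * p x t))) (lam j t * (∑ k, α i k * (v j k : ℝ)) * φ j t) := fun j => by
    rw [mul_assoc]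
    exact (hasSum_mul_sub_comp_sub_of_add_eq_add_const
      (add_eq_add_sum_mul_of_eq_add_sum_mul (hh i) · (v j))
      (summable_mul_mul_of_summable_abs_mul_one_add_mul_one_add (hsummable t i j))
      (hmoment j)).mul_left _
  have hgenerator : HasSum (fun x => h i x * p' x t)
      (∑ j, lam j t * (∑ k, α i k * (v j k : ℝ)) * φ j t) := by
    convert hasSum_sum fun j _ => hjump j using 2 with x
    rw [hmaster x t, ← sum_sub_distrib, mul_sum]
    exact sum_congr rfl fun j _ => by ring
  exact hgenerator.tsum_eq ▸ hφderiv i t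

/-- For a population-type jump process on `ℤ^d` with change vectors `v_j` and
affine propensities `h_j(x) = β_j + ⟨α_j, x⟩`, the natural moment functions
`φ_i(t) = ∑_x h_i(x) p(x,t)` satisfy the closed system of moment equations
`d/dt φ_i(t) = ∑_j λ_j(t) ⟨α_i, v_j⟩ φ_j(t)`. -/
theorem affine_propensities_moment_equations_closed
    (d r : ℕ)
    (v : Fin r → (Fin d → ℤ))
    (hv_distinct : Function.Injective v) (hv_ne : ∀ j : Fin r, v j ≠ 0)
    (α : Fin r → (Fin d → ℝ)) (β : Fin r → ℝ)
    (h : Fin r → (Fin d → ℤ) → ℝ)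
    (hh : ∀ j : Fin r, ∀ x : Fin d → ℤ,
      h j x = β j + ∑ k : Fin d, α j k * (x k : ℝ))
    (lam : Fin r → ℝ → ℝ)
    (p p' : (Fin d → ℤ) → ℝ → ℝ)
    (hp' : ∀ x : Fin d → ℤ, ∀ t : ℝ, HasDerivAt (p x) (p' x t) t)
    (hmaster : ∀ x : Fin d → ℤ, ∀ t : ℝ,
      p' x t = (∑ j : Fin r, lam j t * h j (x - v j) * p (x - v j) t)
        - ∑ j : Fin r, lam j t * h j x * p x t)
    (hsummable : ∀ t : ℝ, ∀ i j : Fin r,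
      Summable (fun x : Fin d → ℤ =>
        |p x t| * (1 + |h i x|) * (1 + |h j x|)))
    (φ : Fin r → ℝ → ℝ)
    (hφ : ∀ i : Fin r, ∀ t : ℝ, φ i t = ∑' x : Fin d → ℤ, h i x * p x t)
    (hφderiv : ∀ i : Fin r, ∀ t : ℝ,
      HasDerivAt (φ i) (∑' x : Fin d → ℤ, h i x * p' x t) t) :
    ∀ i : Fin r, ∀ t : ℝ,
      HasDerivAt (φ i)
        (∑ j : Fin r, lam j t * (∑ k : Fin d, α i k * (v j k : ℝ)) * φ j t) t :=
  affine_propensities_moment_equations_closed_general d r v α β h hh lam p p' hmaster hsummable φ hφ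
    hφderiv
end

section
/- Let c₁, c₂ > 0 and T > 0. Define λ₁(t) = 1 − exp(−c₂(T − t)), λ₂(t) = (1 − exp(−c₂(T − t)))⁻¹, and m(t) = (c₁/c₂) · (1 − exp(−c₂(T − t))) · (1 − exp(−c₂ t)). Then m(0) = 0, m(T) = 0, and for every t ∈ [0, T), m is differentiable at t with m′(t) = λ₁(t) · c₁ − λ₂(t) · c₂ · m(t). -/
/-!
With `u(t) = 1 - e^{-c₂(T-t)}` and `v(t) = 1 - e^{-c₂ t}` one has `u' = -c₂ (1 - u)` and
`v' = c₂ (1 - v)`, so the product rule gives `m' = c₁ (u - v)`. On the other side,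
`λ₁ c₁ - λ₂ c₂ m = c₁ u - u⁻¹ c₁ u v = c₁ (u - v)`, which only needs `u(t) ≠ 0`, i.e. `t < T`.
-/

open Real

lemma hasDerivAt_one_sub_exp_neg_mul (k t : ℝ) :
    HasDerivAt (fun s => 1 - exp (-k * s)) (k * exp (-k * t)) t := by
  simpa [mul_comm] using (((hasDerivAt_id t).const_mul (-k)).exp).const_sub 1

lemma hasDerivAt_one_sub_exp_neg_mul_sub (k T t : ℝ) :
    HasDerivAt (fun s => 1 - exp (-k * (T - s))) (-k * exp (-k * (T - t))) t := by
  simpa [mul_comm] using ((((hasDerivAt_id t).const_sub T).const_mul (-k)).exp).const_sub 1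

lemma one_sub_exp_neg_mul_pos {k x : ℝ} (hk : 0 < k) (hx : 0 < x) : 0 < 1 - exp (-k * x) := by
  have : exp (-k * x) < 1 := exp_lt_one_iff.mpr (by nlinarith)
  linarith

lemma hasDerivAt_birthDeath_posteriorMean (c₁ c₂ T t : ℝ) (hc₂ : c₂ ≠ 0) :
    HasDerivAt (fun s => c₁ / c₂ * (1 - exp (-c₂ * (T - s))) * (1 - exp (-c₂ * s)))
      (c₁ * ((1 - exp (-c₂ * (T - t))) - (1 - exp (-c₂ * t)))) t := by
  refine (((hasDerivAt_one_sub_exp_neg_mul_sub c₂ T t).const_mul (c₁ / c₂)).mul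
    (hasDerivAt_one_sub_exp_neg_mul c₂ t)).congr_deriv ?_
  field_simp
  ring

theorem birth_death_posterior_mean_solves_moment_equation_general
    (c₁ c₂ T : ℝ) (hc₂ : 0 < c₂)
    (lam₁ lam₂ m : ℝ → ℝ)
    (hlam₁ : ∀ t : ℝ, lam₁ t = 1 - Real.exp (-c₂ * (T - t)))
    (hlam₂ : ∀ t : ℝ, lam₂ t = (1 - Real.exp (-c₂ * (T - t)))⁻¹)
    (hm : ∀ t : ℝ, m t = (c₁ / c₂) * (1 - Real.exp (-c₂ * (T - t)))
        * (1 - Real.exp (-c₂ * t))) :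
    m 0 = 0 ∧ m T = 0 ∧
      ∀ t ∈ Set.Ico (0 : ℝ) T,
        HasDerivAt m (lam₁ t * c₁ - lam₂ t * c₂ * m t) t := by
  refine ⟨by simp [hm], by simp [hm], fun t ht => ?_⟩
  have hu : 1 - exp (-c₂ * (T - t)) ≠ 0 := (one_sub_exp_neg_mul_pos hc₂ (sub_pos.mpr ht.2)).ne'
  rw [hlam₁, hlam₂, hm t, funext hm]
  convert hasDerivAt_birthDeath_posteriorMean c₁ c₂ T t hc₂.ne' using 1
  generalize 1 - exp (-c₂ * (T - t)) = u at hu ⊢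
  field_simp

/-- For the linear birth–death process conditioned on `X(0)=0` and `X(T)=0`, the
posterior mean `m(t) = (c₁/c₂)(1−e^{−c₂(T−t)})(1−e^{−c₂ t})` vanishes at the
endpoints and solves the moment equation
`m′(t) = λ₁(t) c₁ − λ₂(t) c₂ m(t)` with the posterior scaling factors
`λ₁(t) = 1 − e^{−c₂(T−t)}` and `λ₂(t) = (1 − e^{−c₂(T−t)})⁻¹`. -/
theorem birth_death_posterior_mean_solves_moment_equation
    (c₁ c₂ T : ℝ) (hc₁ : 0 < c₁) (hc₂ : 0 < c₂) (hT : 0 < T)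
    (lam₁ lam₂ m : ℝ → ℝ)
    (hlam₁ : ∀ t : ℝ, lam₁ t = 1 - Real.exp (-c₂ * (T - t)))
    (hlam₂ : ∀ t : ℝ, lam₂ t = (1 - Real.exp (-c₂ * (T - t)))⁻¹)
    (hm : ∀ t : ℝ, m t = (c₁ / c₂) * (1 - Real.exp (-c₂ * (T - t)))
        * (1 - Real.exp (-c₂ * t))) :
    m 0 = 0 ∧ m T = 0 ∧
      ∀ t ∈ Set.Ico (0 : ℝ) T,
        HasDerivAt m (lam₁ t * c₁ - lam₂ t * c₂ * m t) t :=
  birth_death_posterior_mean_solves_moment_equation_general c₁ c₂ T hc₂ lam₁ lam₂ m hlam₁ hlam₂ hm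
end
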